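/- arXiv:1104.5515 — 2 statements merged into one kernel-verified Lean document; each statement's English description precedes it below -/
import Mathlib

section
/- Let γ₁,…,γₙ ∈ ℂ be pairwise distinct, t ∈ ℂ nonzero, and a₁,…,aₙ ∈ ℂ. Let E₁(t) be the n×n matrix whose last row has entries [E₁(t)]_{n,k} = a_k t^{n−k} for 1 ≤ k ≤ n and all other entries 0. Then for all 1 ≤ i,j ≤ n, [S₀(t)⁻¹ · E₁(t) · S₀(t)]_{i,j} = [S₀(1)⁻¹]_{i,n} · Σ_{k=1}^{n} a_k γⱼ^{k−1}; in particular this conjugated matrix is independent of t. -/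
/-!
With `D(t) = diag(1, t, …, t^{n-1})` one has `S₀(t) = D(t) S₀(1)`, and conjugating by `D(t)`
removes the powers of `t` from the last row: `D(t)⁻¹ E₁(t) D(t) = E₁(1)`. Hence
`S₀(t)⁻¹ E₁(t) S₀(t) = S₀(1)⁻¹ E₁(1) S₀(1)`, and since `E₁(1) = e_n aᵀ` has rank one, its
`(i, j)` entry is the `(i, n)` entry of `S₀(1)⁻¹` times the `j`-th entry of `aᵀ S₀(1)`.
-/

open Matrix

theorem Matrix.inv_diagonal_of_ne_zero {ι K : Type*} [Fintype ι] [DecidableEq ι] [Field K]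
    {d : ι → K} (hd : ∀ i, d i ≠ 0) : (diagonal d)⁻¹ = diagonal d⁻¹ :=
  inv_eq_left_inv <| by
    rw [diagonal_mul_diagonal, ← diagonal_one]
    exact congrArg diagonal (funext fun i => inv_mul_cancel₀ (hd i))

theorem Matrix.transpose_vandermonde_mul_const {R : Type*} [CommRing R] {n : ℕ}
    (γ : Fin n → R) (s : R) :
    (vandermonde fun j => γ j * s)ᵀ =
      diagonal (fun i : Fin n => s ^ (i : ℕ)) * (vandermonde γ)ᵀ := by
  ext i j
  simp [vandermonde_apply, diagonal_mul, mul_pow, mul_comm]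

theorem Matrix.mul_of_ite_mul_apply {ι R : Type*} [Fintype ι] [DecidableEq ι] [Semiring R]
    (A B : Matrix ι ι R) (L : ι) (a : ι → R) (i j : ι) :
    (A * of (fun p q => if p = L then a q else 0) * B) i j = A i L * ∑ k, a k * B k j := by
  rw [Matrix.mul_assoc, mul_apply, Finset.sum_eq_single L]
  · simp [mul_apply]
  · intro p _ hp
    simp [mul_apply, hp]
  · simp

theorem diagonal_pow_conj_lastRow {K : Type*} [Field K] {n : ℕ} {t : K} (ht : t ≠ 0)
    (a : Fin n → K) :
    (diagonal fun i : Fin n => t ^ (i : ℕ))⁻¹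
        * of (fun i j : Fin n => if (i : ℕ) = n - 1 then a j * t ^ (n - 1 - (j : ℕ)) else 0)
        * diagonal (fun i : Fin n => t ^ (i : ℕ))
      = of fun i j : Fin n => if (i : ℕ) = n - 1 then a j else 0 := by
  rw [inv_diagonal_of_ne_zero fun i => pow_ne_zero _ ht]
  ext i j
  simp only [diagonal_mul, mul_diagonal, of_apply, Pi.inv_apply]
  split_ifs with hi
  · have hj : (j : ℕ) ≤ n - 1 := by omega
    rw [hi, mul_assoc, mul_assoc, ← pow_add, Nat.sub_add_cancel hj]
    field_simp
  · simp

/-- For pairwise distinct `γ₁,…,γₙ ∈ ℂ`, nonzero `t ∈ ℂ` and `a₁,…,aₙ ∈ ℂ`, let `E₁(t)` be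
the matrix whose only nonzero row is the last one, with entries `a_k t^{n−k}` (1-indexed).
Then `[S₀(t)⁻¹ · E₁(t) · S₀(t)]_{i,j} = [S₀(1)⁻¹]_{i,n} · Σ_{k=1}^{n} a_k γⱼ^{k−1}`;
in particular the conjugated matrix is independent of `t`. -/
theorem stmt6 (n : ℕ) (hn : 1 ≤ n) (γ : Fin n → ℂ)
    (t : ℂ) (ht : t ≠ 0) (a : Fin n → ℂ)
    (S₀ : ℂ → Matrix (Fin n) (Fin n) ℂ)
    (hS₀ : ∀ s : ℂ, ∀ i j : Fin n, S₀ s i j = (γ j * s) ^ (i : ℕ))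
    (E₁ : ℂ → Matrix (Fin n) (Fin n) ℂ)
    (hE₁ : ∀ s : ℂ, ∀ i j : Fin n, E₁ s i j =
      if (i : ℕ) = n - 1 then a j * s ^ (n - 1 - (j : ℕ)) else 0) :
    ∀ i j : Fin n, ((S₀ t)⁻¹ * E₁ t * S₀ t) i j =
      (S₀ 1)⁻¹ i ⟨n - 1, by omega⟩ * ∑ k : Fin n, a k * γ j ^ (k : ℕ) := by
  intro i j
  set D := diagonal fun i : Fin n => t ^ (i : ℕ)
  have hS₀t : S₀ t = D * S₀ 1 := by
    have hS₀_eq (s : ℂ) : S₀ s = (vandermonde fun j => γ j * s)ᵀ := ext (hS₀ s)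
    simp only [hS₀_eq, transpose_vandermonde_mul_const, mul_one]
    rfl
  have hE₁t : E₁ t =
      of fun i j : Fin n => if (i : ℕ) = n - 1 then a j * t ^ (n - 1 - (j : ℕ)) else 0 :=
    ext (hE₁ t)
  calc ((S₀ t)⁻¹ * E₁ t * S₀ t) i j = ((S₀ 1)⁻¹ * (D⁻¹ * E₁ t * D) * S₀ 1) i j := by
        simp only [hS₀t, Matrix.mul_inv_rev, Matrix.mul_assoc]
    _ = ((S₀ 1)⁻¹ * of (fun p q : Fin n => if p = ⟨n - 1, by omega⟩ then a q else 0) * S₀ 1)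
          i j := by
        rw [hE₁t, diagonal_pow_conj_lastRow ht]
        simp only [Fin.ext_iff]
    _ = (S₀ 1)⁻¹ i ⟨n - 1, by omega⟩ * ∑ k : Fin n, a k * γ j ^ (k : ℕ) := by
        simp only [mul_of_ite_mul_apply, hS₀, mul_one]
end

section
/- Let a ≤ b be real numbers, let ψ : [a,b] → ℂ be continuously differentiable with t ↦ Re ψ(t) nondecreasing on [a,b], let g : [a,b] → ℂ be continuous, and let w : [a,b] → ℂ be differentiable with w′(t) = ψ′(t) w(t) + g(t) for all t ∈ [a,b] and w(b) = 0. Then for every t ∈ [a,b], |w(t)| ≤ ∫ₜᵇ |g(s)| ds. -/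
/-!
Variation of constants: `(exp (-ψ) • w)' = exp (-ψ) • g`, so integrating from `t` to `b` and
using `w b = 0` gives `w t = -∫ₜᵇ exp (ψ t - ψ s) • g s ds`. For `s ≥ t` the factor
`exp (ψ t - ψ s)` has modulus `exp (Re ψ t - Re ψ s) ≤ 1` because `Re ψ` is nondecreasing.
-/

open Complex Set intervalIntegral

variable {E : Type*} [NormedAddCommGroup E] [NormedSpace ℂ E]

theorem hasDerivAt_cexp_neg_smul {ψ : ℝ → ℂ} {w : ℝ → E} {z : ℂ} {v : E} {s : ℝ}
    (hψ : HasDerivAt ψ z s) (hw : HasDerivAt w (z • w s + v) s) :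
    HasDerivAt (fun u => exp (-ψ u) • w u) (exp (-ψ s) • v) s :=
  (hψ.neg.cexp.smul hw).congr_deriv (by module)

theorem norm_cexp_smul_le {z : ℂ} (hz : z.re ≤ 0) (v : E) : ‖exp z • v‖ ≤ ‖v‖ := by
  rw [norm_smul, norm_exp]
  exact mul_le_of_le_one_left (norm_nonneg v) (Real.exp_le_one_iff.mpr hz)

variable [CompleteSpace E]

theorem eq_neg_integral_cexp_sub_smul_of_hasDerivAt {ψ ψ' : ℝ → ℂ} {g w : ℝ → E} {t b : ℝ}
    (htb : t ≤ b) (hψ : ∀ s ∈ Icc t b, HasDerivAt ψ (ψ' s) s) (hg : ContinuousOn g (Icc t b))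
    (hw : ∀ s ∈ Icc t b, HasDerivAt w (ψ' s • w s + g s) s) (hwb : w b = 0) :
    w t = -∫ s in t..b, exp (ψ t - ψ s) • g s := by
  have hψc : ContinuousOn ψ (Icc t b) := fun s hs => (hψ s hs).continuousAt.continuousWithinAt
  have hftc : ∫ s in t..b, exp (-ψ s) • g s = -(exp (-ψ t) • w t) := by
    rw [integral_eq_sub_of_hasDerivAt (f := fun u => exp (-ψ u) • w u), hwb, smul_zero, zero_sub]
    · rw [uIcc_of_le htb]
      exact fun s hs => hasDerivAt_cexp_neg_smul (hψ s hs) (hw s hs)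
    · rw [← uIcc_of_le htb] at hψc hg
      exact (hψc.neg.cexp.smul hg).intervalIntegrable
  simp_rw [sub_eq_add_neg (ψ t), exp_add, ← smul_smul, integral_smul, hftc, smul_neg, smul_smul,
    ← exp_add, add_neg_cancel, exp_zero, one_smul, neg_neg]

theorem norm_le_integral_norm_of_hasDerivAt {ψ ψ' : ℝ → ℂ} {g w : ℝ → E} {t b : ℝ}
    (htb : t ≤ b) (hψ : ∀ s ∈ Icc t b, HasDerivAt ψ (ψ' s) s)
    (hmono : MonotoneOn (fun s => (ψ s).re) (Icc t b)) (hg : ContinuousOn g (Icc t b))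
    (hw : ∀ s ∈ Icc t b, HasDerivAt w (ψ' s • w s + g s) s) (hwb : w b = 0) :
    ‖w t‖ ≤ ∫ s in t..b, ‖g s‖ := by
  rw [eq_neg_integral_cexp_sub_smul_of_hasDerivAt htb hψ hg hw hwb, norm_neg]
  refine norm_integral_le_of_norm_le htb (Filter.Eventually.of_forall fun s hs => ?_) ?_
  · refine norm_cexp_smul_le ?_ (g s)
    rw [sub_re, sub_nonpos]
    exact hmono (left_mem_Icc.mpr htb) (Ioc_subset_Icc_self hs) hs.1.le
  · rw [← uIcc_of_le htb] at hg
    exact hg.norm.intervalIntegrable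

theorem stmt12_general (a b : ℝ) (ψ ψ' g w : ℝ → ℂ)
    (hψ : ∀ t ∈ Set.Icc a b, HasDerivAt ψ (ψ' t) t)
    (hmono : MonotoneOn (fun t => (ψ t).re) (Set.Icc a b))
    (hg : ContinuousOn g (Set.Icc a b))
    (hw : ∀ t ∈ Set.Icc a b, HasDerivAt w (ψ' t * w t + g t) t)
    (hwb : w b = 0) :
    ∀ t ∈ Set.Icc a b, ‖w t‖ ≤ ∫ s in t..b, ‖g s‖ := by
  intro t ⟨hat, htb⟩
  have hsub : Icc t b ⊆ Icc a b := Icc_subset_Icc_left hat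
  exact norm_le_integral_norm_of_hasDerivAt htb (fun s hs => hψ s (hsub hs)) (hmono.mono hsub)
    (hg.mono hsub) (fun s hs => hw s (hsub hs)) hwb

/-- If `ψ : [a,b] → ℂ` is continuously differentiable with `Re ψ` nondecreasing, `g` is
continuous, and `w` solves `w′ = ψ′ w + g` with `w(b) = 0`, then
`|w(t)| ≤ ∫ₜᵇ |g(s)| ds` for all `t ∈ [a,b]`. -/
theorem stmt12 (a b : ℝ) (hab : a ≤ b) (ψ ψ' g w : ℝ → ℂ)
    (hψ : ∀ t ∈ Set.Icc a b, HasDerivAt ψ (ψ' t) t)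
    (hψ' : ContinuousOn ψ' (Set.Icc a b))
    (hmono : MonotoneOn (fun t => (ψ t).re) (Set.Icc a b))
    (hg : ContinuousOn g (Set.Icc a b))
    (hw : ∀ t ∈ Set.Icc a b, HasDerivAt w (ψ' t * w t + g t) t)
    (hwb : w b = 0) :
    ∀ t ∈ Set.Icc a b, ‖w t‖ ≤ ∫ s in t..b, ‖g s‖ :=
  stmt12_general a b ψ ψ' g w hψ hmono hg hw hwb
end
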